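/- Let E be a finite directed graph without sinks in which every loop has an exit, let k ≥ 1, and let σ be a permutation of E^k preserving sources and ranges, with associated partial maps f_{e,g} on Ψ as above. Then the following are equivalent: (i) [Condition (d)] there exists m ≥ 1 such that for all pairs (e_1, g_1), …, (e_m, g_m) ∈ E¹ × E¹ the composition f_{e_1,g_1} ∘ ⋯ ∘ f_{e_m,g_m} has empty domain; (ii) there exists a partial order ≤ on Ψ such that (a) the minimal elements of ≤ are exactly the elements of Ψ ∖ Δ, and (b) f_{e,g}(α, β) < (α, β) (strict inequality) for all e, g ∈ E¹ and all (α, β) ∈ D(f_{e,g}). -/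

import Mathlib

structure FinDirGraph where
  V : Type
  E : Type
  [instFV : Fintype V]
  [instFE : Fintype E]
  [instDV : DecidableEq V]
  [instDE : DecidableEq E]
  r : E → V
  s : E → V

attribute [instance] FinDirGraph.instFV FinDirGraph.instFE FinDirGraph.instDV FinDirGraph.instDE

namespace FinDirGraph

variable (G : FinDirGraph)

def IsPathFrom : G.V → List G.E → Prop
  | _, [] => True
  | v, e :: l => G.s e = v ∧ IsPathFrom (G.r e) l

def rangeFrom : G.V → List G.E → G.V
  | v, [] => v
  | _, e :: l => rangeFrom (G.r e) l

structure Path where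
  src : G.V
  edges : List G.E
  ok : G.IsPathFrom src edges

variable {G}

def Path.len (μ : G.Path) : ℕ := μ.edges.length

def Path.rng (μ : G.Path) : G.V := G.rangeFrom μ.src μ.edges

variable (G)

def NoSinks : Prop := ∀ v : G.V, ∃ e : G.E, G.s e = v

def NoSources : Prop := ∀ v : G.V, ∃ e : G.E, G.r e = v

def EveryLoopHasExit : Prop :=
  ∀ μ : G.Path, μ.edges ≠ [] → μ.src = μ.rng →
    ∃ e ∈ μ.edges, ∃ f g : G.E, f ≠ g ∧ G.s f = G.s e ∧ G.s g = G.s e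

variable {G}

/-- Prepending an edge to a path. -/
def Path.cons (e : G.E) (μ : G.Path) (h : μ.src = G.r e) : G.Path :=
  ⟨G.s e, e :: μ.edges, ⟨rfl, h ▸ μ.ok⟩⟩

lemma isPathFrom_snoc : ∀ (l : List G.E) (v : G.V) (g : G.E),
    G.IsPathFrom v l → G.s g = G.rangeFrom v l → G.IsPathFrom v (l ++ [g])
  | [], _, _, _, h => ⟨h, trivial⟩
  | e :: t, _, g, hp, h => ⟨hp.1, isPathFrom_snoc t (G.r e) g hp.2 h⟩

/-- Appending an edge to a path. -/
def Path.snoc (μ : G.Path) (g : G.E) (h : G.s g = μ.rng) : G.Path :=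
  ⟨μ.src, μ.edges ++ [g], isPathFrom_snoc μ.edges μ.src g μ.ok h⟩

variable (G)

/-- The set `E^k` of paths of length `k`, as a type. -/
def PathOfLen (k : ℕ) := {μ : G.Path // μ.len = k}

variable {G}

lemma len_cons_eq {k : ℕ} (hk : 1 ≤ k) {e : G.E} {α : G.Path}
    (hlen : α.len = k - 1) (hsrc : α.src = G.r e) : (Path.cons e α hsrc).len = k := by
  simp only [Path.len, Path.cons, List.length_cons] at *
  omega

/-- The relational graph of the map `f_e : E^{k-1}_{*,r(e)} → E^{k-1}_{*,s(e)}`,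
`f_e(α) = β` iff `σ(eα) = βg` for some edge `g`. -/
def FRel {k : ℕ} (hk : 1 ≤ k) (σ : Equiv.Perm (PathOfLen G k)) (e : G.E)
    (α β : G.Path) : Prop :=
  β.len = k - 1 ∧
    ∃ (hlen : α.len = k - 1) (hsrc : α.src = G.r e) (g : G.E) (hg : G.s g = β.rng),
      (σ ⟨Path.cons e α hsrc, len_cons_eq hk hlen hsrc⟩).val = Path.snoc β g hg

/-- The relational graph of the composition `f_{e₁} ∘ ⋯ ∘ f_{e_m}` (with `f_{e_m}`
applied first), for the list `[e₁, …, e_m]`. -/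
def FRelComp {k : ℕ} (hk : 1 ≤ k) (σ : Equiv.Perm (PathOfLen G k)) :
    List G.E → G.Path → G.Path → Prop
  | [], α, β => α = β
  | e :: t, α, β => ∃ γ, FRelComp hk σ t α γ ∧ FRel hk σ e γ β

/-- Condition (b): some length `m` such that every `m`-fold composition of
the maps `f_e` has empty domain, or full domain and singleton range. -/
def ConditionB {k : ℕ} (hk : 1 ≤ k) (σ : Equiv.Perm (PathOfLen G k)) : Prop :=
  ∃ m : ℕ, 1 ≤ m ∧ ∀ es : List G.E, es.length = m → ∀ elast, es.getLast? = some elast →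
    ((∀ α β, ¬ FRelComp hk σ es α β) ∨
      ((∀ α : G.Path, α.len = k - 1 → α.src = G.r elast → ∃ β, FRelComp hk σ es α β) ∧
        (∃ β₀, ∀ α β, FRelComp hk σ es α β → β = β₀)))

/-- The relational graph of the partial map `f_{e,g}` on pairs of distinct paths. -/
def FRel2 {k : ℕ} (hk : 1 ≤ k) (σ : Equiv.Perm (PathOfLen G k)) (e g : G.E)
    (p q : G.Path × G.Path) : Prop :=
  p.1 ≠ p.2 ∧ q.1 ≠ q.2 ∧
    ∃ (h1 : p.1.len = k - 1) (h2 : p.2.len = k - 1)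
      (hs1 : p.1.src = G.r e) (hs2 : p.2.src = G.r g)
      (h : G.E) (hg1 : G.s h = q.1.rng) (hg2 : G.s h = q.2.rng),
      (σ ⟨Path.cons e p.1 hs1, len_cons_eq hk h1 hs1⟩).val = Path.snoc q.1 h hg1 ∧
      (σ ⟨Path.cons g p.2 hs2, len_cons_eq hk h2 hs2⟩).val = Path.snoc q.2 h hg2

/-- The relational graph of the composition `f_{e₁,g₁} ∘ ⋯ ∘ f_{e_m,g_m}`. -/
def FRel2Comp {k : ℕ} (hk : 1 ≤ k) (σ : Equiv.Perm (PathOfLen G k)) :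
    List (G.E × G.E) → G.Path × G.Path → G.Path × G.Path → Prop
  | [], p, q => p = q
  | eg :: t, p, q => ∃ o, FRel2Comp hk σ t p o ∧ FRel2 hk σ eg.1 eg.2 o q

/-- Condition (d): some length `m` such that every `m`-fold composition of the
partial maps `f_{e,g}` has empty domain. -/
def ConditionD {k : ℕ} (hk : 1 ≤ k) (σ : Equiv.Perm (PathOfLen G k)) : Prop :=
  ∃ m : ℕ, 1 ≤ m ∧ ∀ L : List (G.E × G.E), L.length = m →
    ∀ p q, ¬ FRel2Comp hk σ L p q

variable (G)

/-- Pairs of paths of length `k-1` with a common source. -/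
def PairB (k : ℕ) :=
  {p : G.Path × G.Path // p.1.len = k - 1 ∧ p.2.len = k - 1 ∧ p.1.src = p.2.src}

/-- `Ψ`: pairs of distinct paths of length `k-1`. -/
def PairD (k : ℕ) :=
  {p : G.Path × G.Path // p.1.len = k - 1 ∧ p.2.len = k - 1 ∧ p.1 ≠ p.2}

end FinDirGraph

/-!
Relate `q` to `p` when `q = f_{e,g}(p)` for some edges `e, g`. This is a relation on the finite
set `Ψ`, and a composition of `m` maps `f_{e,g}` with nonempty domain is a walk of length `m`
for it. If the relation has a cycle, its elements can be followed forever, so there are walks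
of every length and condition (d) fails. If it is acyclic, reachability is a partial order whose
minimal elements are those outside every domain, and which each `f_{e,g}` strictly decreases.
Conversely, a walk along which a partial order strictly decreases visits distinct elements,
so no walk is longer than `|Ψ|`.
-/

open Relation

section Relation

variable {α : Type*} {r : α → α → Prop}

theorem exists_isChain_cons_length_of_transGen_self {a : α} (ha : TransGen r a a) (n : ℕ) :
    ∃ l : List α, l.length = n ∧ List.IsChain r (a :: l) := by
  induction n generalizing a with
  | zero => exact ⟨[], rfl, .singleton a⟩
  | succ n ih =>
    -- a successor of `a` on the cycle lies on a cycle again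
    obtain ⟨b, hab, hba⟩ := TransGen.head'_iff.mp ha
    obtain ⟨l, hl, hchain⟩ := ih (TransGen.tail' hba hab)
    exact ⟨b :: l, by simp [hl], .cons_cons hab hchain⟩

theorem isPartialOrder_reflTransGen (hr : ∀ a, ¬TransGen r a a) :
    IsPartialOrder α (ReflTransGen r) where
  antisymm a b hab hba := by
    rcases reflTransGen_iff_eq_or_transGen.mp hab with rfl | hab
    · rfl
    · exact absurd (hab.trans_left hba) (hr a)

theorem forall_reflTransGen_eq_iff (hr : ∀ a, ¬TransGen r a a) {a : α} :
    (∀ b, ReflTransGen r b a → b = a) ↔ ∀ b, ¬r b a := by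
  refine ⟨fun h b hba => ?_, fun h b hba => ?_⟩
  · obtain rfl := h b (.single hba)
    exact hr b (.single hba)
  · rcases hba.cases_tail with rfl | ⟨c, -, hca⟩
    · rfl
    · exact absurd hca (h c)

theorem List.IsChain.length_le_card_of_lt [Fintype α] {le : α → α → Prop}
    (hle : IsPartialOrder α le) (hr : ∀ a b, r a b → le a b ∧ a ≠ b) {l : List α}
    (hl : List.IsChain r l) : l.length ≤ Fintype.card α := by
  let lt a b := le a b ∧ a ≠ b
  have : Trans lt lt lt := ⟨fun hab hbc =>
    ⟨hle.trans _ _ _ hab.1 hbc.1, fun hca => hab.2 (hle.antisymm _ _ hab.1 (hca ▸ hbc.1))⟩⟩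
  have hpw : l.Pairwise lt := (hl.imp hr).pairwise
  exact List.Nodup.length_le_card (hpw.imp (·.2))

end Relation

namespace FinDirGraph

variable {G : FinDirGraph}

theorem Path.src_edges_injective :
    Function.Injective fun μ : G.Path => (μ.src, μ.edges) := by
  rintro ⟨_, _, _⟩ ⟨_, _, _⟩ h
  simp_all

instance (n : ℕ) : Finite (PathOfLen G n) :=
  Finite.of_injective
    (fun μ : PathOfLen G n => ((μ.val.src, ⟨μ.val.edges, μ.prop⟩) : G.V × List.Vector G.E n))
    fun μ ν h => by
      obtain ⟨hsrc, hedges⟩ := Prod.ext_iff.mp h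
      exact Subtype.ext (Path.src_edges_injective (Prod.ext hsrc (congrArg Subtype.val hedges)))

instance (k : ℕ) : Finite (PairD G k) :=
  Finite.of_injective
    (fun p : PairD G k =>
      ((⟨p.val.1, p.prop.1⟩, ⟨p.val.2, p.prop.2.1⟩) : PathOfLen G (k - 1) × PathOfLen G (k - 1)))
    fun p q h => by
      obtain ⟨h₁, h₂⟩ := Prod.ext_iff.mp h
      exact Subtype.ext (Prod.ext (congrArg Subtype.val h₁) (congrArg Subtype.val h₂))

theorem Path.len_snoc (μ : G.Path) (g : G.E) (h : G.s g = μ.rng) :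
    (μ.snoc g h).len = μ.len + 1 := by
  simp [Path.snoc, Path.len]

variable {k : ℕ} {hk : 1 ≤ k} {σ : Equiv.Perm (PathOfLen G k)}

theorem FRel2.exists_pairD_left {e g : G.E} {p q : G.Path × G.Path}
    (h : FRel2 hk σ e g p q) : ∃ P : PairD G k, P.val = p :=
  ⟨⟨p, h.2.2.1, h.2.2.2.1, h.1⟩, rfl⟩

theorem FRel2.exists_pairD_right {e g : G.E} {p q : G.Path × G.Path}
    (h : FRel2 hk σ e g p q) : ∃ Q : PairD G k, Q.val = q := by
  obtain ⟨-, hq, h1, h2, hs1, hs2, _, _, _, hσ1, hσ2⟩ := h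
  have hlen₁ := (σ ⟨Path.cons e p.1 hs1, len_cons_eq hk h1 hs1⟩).prop
  have hlen₂ := (σ ⟨Path.cons g p.2 hs2, len_cons_eq hk h2 hs2⟩).prop
  rw [hσ1, Path.len_snoc] at hlen₁
  rw [hσ2, Path.len_snoc] at hlen₂
  exact ⟨⟨q, by omega, by omega, hq⟩, rfl⟩

variable (hk σ) in
/-- `IsFImage hk σ Q P` says that `Q = f_{e,g}(P)` for some edges `e, g`. -/
def IsFImage (Q P : PairD G k) : Prop :=
  ∃ e g : G.E, FRel2 hk σ e g P.val Q.val

theorem exists_isFImage_iff {P : PairD G k} :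
    (∃ Q, IsFImage hk σ Q P) ↔
      ∃ (e g : G.E) (q : G.Path × G.Path), FRel2 hk σ e g P.val q := by
  constructor
  · rintro ⟨Q, e, g, h⟩
    exact ⟨e, g, Q.val, h⟩
  · rintro ⟨e, g, q, h⟩
    obtain ⟨Q, rfl⟩ := h.exists_pairD_right
    exact ⟨Q, e, g, h⟩

theorem FRel2Comp.exists_isChain_isFImage {L : List (G.E × G.E)} {p : G.Path × G.Path}
    {Q : PairD G k} (h : FRel2Comp hk σ L p Q.val) :
    ∃ l : List (PairD G k), l.length = L.length ∧ List.IsChain (IsFImage hk σ) (Q :: l) := by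
  induction L generalizing Q with
  | nil => exact ⟨[], rfl, .singleton Q⟩
  | cons eg L ih =>
    obtain ⟨o, ho, hstep⟩ := h
    obtain ⟨O, rfl⟩ := hstep.exists_pairD_left
    obtain ⟨l, hl, hchain⟩ := ih ho
    exact ⟨O :: l, by simp [hl], .cons_cons ⟨eg.1, eg.2, hstep⟩ hchain⟩

theorem exists_frel2Comp_of_isChain_isFImage {l : List (PairD G k)} {Q : PairD G k}
    (h : List.IsChain (IsFImage hk σ) (Q :: l)) :
    ∃ (L : List (G.E × G.E)) (p : G.Path × G.Path),
      L.length = l.length ∧ FRel2Comp hk σ L p Q.val := by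
  induction l generalizing Q with
  | nil => exact ⟨[], Q.val, rfl, rfl⟩
  | cons O l ih =>
    obtain ⟨⟨e, g, hstep⟩, hchain⟩ := List.isChain_cons_cons.mp h
    obtain ⟨L, p, hL, hcomp⟩ := ih hchain
    exact ⟨(e, g) :: L, p, by simp [hL], O.val, hcomp, hstep⟩

theorem not_transGen_isFImage_self (hd : ConditionD hk σ) (P : PairD G k) :
    ¬TransGen (IsFImage hk σ) P P := by
  intro hP
  obtain ⟨m, -, hm⟩ := hd
  obtain ⟨l, hl, hchain⟩ := exists_isChain_cons_length_of_transGen_self hP m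
  obtain ⟨L, p, hL, hcomp⟩ := exists_frel2Comp_of_isChain_isFImage hchain
  exact hm L (hL.trans hl) p P.val hcomp

theorem conditionD_of_isPartialOrder {le : PairD G k → PairD G k → Prop}
    (hle : IsPartialOrder (PairD G k) le)
    (hlt : ∀ (e g : G.E) (p q : PairD G k), FRel2 hk σ e g p.val q.val → le q p ∧ q ≠ p) :
    ConditionD hk σ := by
  have := Fintype.ofFinite (PairD G k)
  refine ⟨Fintype.card (PairD G k) + 1, by omega, fun L hL p q hcomp => ?_⟩
  obtain ⟨eg, L', rfl⟩ := List.exists_cons_of_length_eq_add_one hL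
  have ⟨_, _, hstep⟩ := hcomp
  obtain ⟨Q, rfl⟩ := hstep.exists_pairD_right
  obtain ⟨l, hl, hchain⟩ := FRel2Comp.exists_isChain_isFImage hcomp
  have := hchain.length_le_card_of_lt hle fun a b ⟨e, g, h⟩ => hlt e g b a h
  simp only [List.length_cons] at this hl hL
  omega

end FinDirGraph

open FinDirGraph in
theorem stmt_17_general (G : FinDirGraph)
    (k : ℕ) (hk : 1 ≤ k) (σ : Equiv.Perm (PathOfLen G k)) :
    ConditionD hk σ ↔
      ∃ le : PairD G k → PairD G k → Prop, IsPartialOrder (PairD G k) le ∧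
        -- minimal elements are exactly the elements of Ψ \ Δ
        (∀ p : PairD G k, (∀ q, le q p → q = p) ↔
          ¬∃ (e g : G.E) (q : G.Path × G.Path), FRel2 hk σ e g p.val q) ∧
        -- f_{e,g}(α, β) < (α, β) on the domain of f_{e,g}
        (∀ (e g : G.E) (p q : PairD G k),
          FRel2 hk σ e g p.val q.val → le q p ∧ q ≠ p) := by
  refine ⟨fun hd => ?_, fun ⟨_, hle, _, hlt⟩ => conditionD_of_isPartialOrder hle hlt⟩
  have hacyc := not_transGen_isFImage_self hd
  refine ⟨ReflTransGen (IsFImage hk σ), isPartialOrder_reflTransGen hacyc, fun p => ?_,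
    fun e g p q h => ⟨.single ⟨e, g, h⟩, fun hqp => by
      subst hqp; exact hacyc _ (.single ⟨e, g, h⟩)⟩⟩
  rw [forall_reflTransGen_eq_iff hacyc, ← exists_isFImage_iff, not_exists]

open FinDirGraph in
/-- Lemma 6.2 (conditiond). -/
theorem stmt_17 (G : FinDirGraph) (hns : G.NoSinks) (hle : G.EveryLoopHasExit)
    (k : ℕ) (hk : 1 ≤ k) (σ : Equiv.Perm (PathOfLen G k))
    (hσs : ∀ μ, (σ μ).val.src = μ.val.src) (hσr : ∀ μ, (σ μ).val.rng = μ.val.rng) :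
    ConditionD hk σ ↔
      ∃ le : PairD G k → PairD G k → Prop, IsPartialOrder (PairD G k) le ∧
        -- minimal elements are exactly the elements of Ψ \ Δ
        (∀ p : PairD G k, (∀ q, le q p → q = p) ↔
          ¬∃ (e g : G.E) (q : G.Path × G.Path), FRel2 hk σ e g p.val q) ∧
        -- f_{e,g}(α, β) < (α, β) on the domain of f_{e,g}
        (∀ (e g : G.E) (p q : PairD G k),
          FRel2 hk σ e g p.val q.val → le q p ∧ q ≠ p) :=
  stmt_17_general G k hk σ
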